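/- Let q ≥ 3 and let ∇ ∈ ℝ^{p×n} be the discrete gradient operator of the 2-dimensional regular grid graph on V = {0,…,q−1}², with n = q² and p = 2q(q−1). Let ℓ be an integer with 4 < ℓ ≤ p and let m ∈ ℕ satisfy m ≥ 2n − (ℓ + √(2ℓ + 1) − 1). Then κ_∇(ℓ) ≤ m/2; that is, the number of measurements m meets the sufficient condition of the unknown-cosupport uniqueness criterion, so that under the assumptions of that criterion every ℓ-cosparse solution of the measurement equations is unique. -/

import Mathlib

/-!
A vector of `W_Λ` is constant along the edges of `Λ`, so `dim W_Λ` is at most the number `c` of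
connected components of the subgraph `(V, Λ)`. Take a component with `s` vertices, `k` edges,
occupying `r` rows and `r'` columns. Its horizontal edges inject, via their left endpoints, into
the vertices that are not rightmost in their row, so there are at most `s - r` of them; likewise at
most `s - r'` vertical ones. Together with `s ≤ r r'` this gives
`2k + 1 ≤ 4 r r' - 2r - 2r' + 1 ≤ (r + r' - 1)²`, hence `k + √(2k + 1) + 1 ≤ 2s`. Summing over the
components and using that `k ↦ √(2k + 1) - 1` is subadditive yields
`2c + |Λ| + √(2|Λ| + 1) - 1 ≤ 2n`.
-/

/-- Base-`q` encoding of a grid point, used to orient the edges of the grid graph. -/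
def enc (q d : ℕ) (v : Fin d → Fin q) : ℕ := ∑ i : Fin d, q ^ (i : ℕ) * (v i : ℕ)

/-- The (oriented) edges of the regular grid graph on `{0,…,q−1}^d`: pairs of vertices at
ℓ1-distance 1, canonically oriented. They index the rows of the discrete gradient. -/
abbrev OEdge (q d : ℕ) : Type :=
  {e : (Fin d → Fin q) × (Fin d → Fin q) //
    (∑ i, |(e.1 i : ℤ) - (e.2 i : ℤ)|) = 1 ∧ enc q d e.1 < enc q d e.2}

/-- The discrete gradient operator of the regular grid graph: one row per edge
`e = (v₁, v₂)`, with entry `−1` in the column of `v₁`, `+1` in the column of `v₂`. -/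
def grad (q d : ℕ) : Matrix (OEdge q d) (Fin d → Fin q) ℝ :=
  Matrix.of fun e v => if v = e.1.2 then 1 else if v = e.1.1 then -1 else 0

/-- `W_Λ`: the nullspace of the rows of the discrete gradient indexed by `Λ`. -/
noncomputable def Wgrad (q d : ℕ) (Λ : Finset (OEdge q d)) :
    Submodule ℝ ((Fin d → Fin q) → ℝ) :=
  ⨅ e ∈ Λ, LinearMap.ker
    ((LinearMap.proj e : (OEdge q d → ℝ) →ₗ[ℝ] ℝ) ∘ₗ (grad q d).mulVecLin)

/-- `κ_∇(ℓ) = max{dim W_Λ : Λ ⊆ E, |Λ| ≥ ℓ}` for the discrete gradient of the grid. -/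
noncomputable def kappaGrad (q d ℓ : ℕ) : ℕ :=
  (Finset.univ.filter (fun Λ : Finset (OEdge q d) => ℓ ≤ Λ.card)).sup
    (fun Λ => Module.finrank ℝ (Wgrad q d Λ))

open Finset

theorem card_add_card_image_le_of_forall_exists_lt {α β γ : Type*} [DecidableEq α]
    [DecidableEq β] [LinearOrder γ] {S T : Finset α} (hTS : T ⊆ S) (f : α → β) (g : α → γ)
    (hT : ∀ t ∈ T, ∃ s ∈ S, f s = f t ∧ g t < g s) :
    #T + #(S.image f) ≤ #S := by
  -- each fibre of `f` has a `g`-maximal element, and it lies outside `T`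
  have hsub : S.image f ⊆ (S \ T).image f := by
    intro y hy
    obtain ⟨v, hv, rfl⟩ := mem_image.mp hy
    obtain ⟨u, hu, hmax⟩ := exists_max_image (S.filter (f · = f v)) g ⟨v, by simp [hv]⟩
    rw [mem_filter] at hu
    refine mem_image.mpr ⟨u, mem_sdiff.mpr ⟨hu.1, fun huT => ?_⟩, hu.2⟩
    obtain ⟨s, hs, hfs, hlt⟩ := hT u huT
    exact (hmax s (mem_filter.mpr ⟨hs, hfs.trans hu.2⟩)).not_gt hlt
  have hle := (card_le_card hsub).trans card_image_le
  rw [card_sdiff_of_subset hTS] at hle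
  have := card_le_card hTS
  omega

theorem card_le_prod_card_image {ι α : Type*} [Fintype ι] [DecidableEq ι] [DecidableEq α]
    (S : Finset (ι → α)) : #S ≤ ∏ i, #(S.image (· i)) := by
  rw [← Fintype.card_piFinset]
  exact card_le_card fun v hv => Fintype.mem_piFinset.mpr fun i => mem_image_of_mem _ hv

theorem finrank_le_card_quot {K V : Type*} [Field K] [Finite V] (r : V → V → Prop)
    (W : Submodule K (V → K)) (hW : ∀ x ∈ W, ∀ a b, r a b → x a = x b) :
    Module.finrank K W ≤ Nat.card (Quot r) := by
  have := Fintype.ofFinite (Quot r)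
  have hrange : W ≤ LinearMap.range (LinearMap.funLeft K K (Quot.mk r)) := fun x hx =>
    ⟨Quot.lift x (hW x hx), rfl⟩
  calc Module.finrank K W
      ≤ Module.finrank K (LinearMap.range (LinearMap.funLeft K K (Quot.mk r))) :=
        Submodule.finrank_mono hrange
    _ ≤ Module.finrank K (Quot r → K) := LinearMap.finrank_range_le _
    _ = Nat.card (Quot r) := by rw [Module.finrank_fintype_fun_eq_card, Nat.card_eq_fintype_card]

theorem sqrt_two_mul_add_add_one_le {x y : ℝ} (hx : 0 ≤ x) (hy : 0 ≤ y) :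
    √(2 * (x + y) + 1) + 1 ≤ √(2 * x + 1) + √(2 * y + 1) := by
  have hA : 1 ≤ √(2 * x + 1) := Real.one_le_sqrt.mpr (by linarith)
  have hB : 1 ≤ √(2 * y + 1) := Real.one_le_sqrt.mpr (by linarith)
  have hA2 := Real.sq_sqrt (show 0 ≤ 2 * x + 1 by linarith)
  have hB2 := Real.sq_sqrt (show 0 ≤ 2 * y + 1 by linarith)
  suffices √(2 * (x + y) + 1) ≤ √(2 * x + 1) + √(2 * y + 1) - 1 by linarith
  rw [Real.sqrt_le_iff]
  constructor
  · linarith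
  · nlinarith [mul_nonneg (sub_nonneg.2 hA) (sub_nonneg.2 hB)]

theorem add_sqrt_two_mul_add_one_add_one_le {k r r' s : ℝ} (hr : 1 ≤ r + r') (hs : s ≤ r * r')
    (h : k + r + r' ≤ 2 * s) : k + √(2 * k + 1) + 1 ≤ 2 * s := by
  suffices √(2 * k + 1) ≤ r + r' - 1 by linarith
  rw [Real.sqrt_le_iff]
  constructor
  · linarith
  · nlinarith [sq_nonneg (r - r')]

def IsStep {q d : ℕ} (i : Fin d) (a b : Fin d → Fin q) : Prop :=
  (b i : ℕ) = a i + 1 ∧ ∀ j ≠ i, b j = a j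

instance {q d : ℕ} (i : Fin d) (a b : Fin d → Fin q) : Decidable (IsStep i a b) :=
  inferInstanceAs (Decidable (_ ∧ _))

theorem IsStep.right_unique {q d : ℕ} {i : Fin d} {a b b' : Fin d → Fin q}
    (h : IsStep i a b) (h' : IsStep i a b') : b = b' := by
  funext j
  by_cases hj : j = i
  · subst hj; exact Fin.ext (h.1.trans h'.1.symm)
  · exact (h.2 j hj).trans (h'.2 j hj).symm

theorem OEdge.isStep {q : ℕ} (e : OEdge q 2) : IsStep 0 e.1.1 e.1.2 ∨ IsStep 1 e.1.1 e.1.2 := by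
  obtain ⟨⟨a, b⟩, hd, henc⟩ := e
  simp only [Fin.sum_univ_two] at hd
  simp only [enc, Fin.sum_univ_two, Fin.val_zero, Fin.val_one, pow_zero, pow_one, one_mul]
    at henc
  simp only [IsStep, Fin.forall_fin_two, ne_eq, not_true_eq_false, IsEmpty.forall_iff,
    true_and, and_true, zero_ne_one, one_ne_zero, not_false_eq_true, forall_const]
  have hcases : ((a 1 : ℕ) = b 1 ∧ ((a 0 : ℕ) = b 0 + 1 ∨ (b 0 : ℕ) = a 0 + 1)) ∨
      ((a 0 : ℕ) = b 0 ∧ ((a 1 : ℕ) = b 1 + 1 ∨ (b 1 : ℕ) = a 1 + 1)) := by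
    rcases abs_cases ((a 0 : ℤ) - (b 0 : ℤ)) with ⟨h0, _⟩ | ⟨h0, _⟩ <;>
      rcases abs_cases ((a 1 : ℤ) - (b 1 : ℤ)) with ⟨h1, _⟩ | ⟨h1, _⟩ <;> omega
  -- `enc a < enc b` decides the direction of the step
  rcases hcases with ⟨h1, h0⟩ | ⟨h0, h1⟩
  · rw [h1] at henc
    have := Nat.lt_of_add_lt_add_right henc
    exact .inl ⟨by omega, Fin.ext h1.symm⟩
  · rw [h0] at henc
    have := Nat.lt_of_mul_lt_mul_left (Nat.lt_of_add_lt_add_left henc)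
    exact .inr ⟨by omega, Fin.ext h0.symm⟩

theorem card_filter_isStep_add_card_image_le {q d : ℕ} {i j : Fin d} (hji : j ≠ i)
    {S : Finset (Fin d → Fin q)} {F : Finset (OEdge q d)}
    (hF : ∀ e ∈ F, e.1.1 ∈ S ∧ e.1.2 ∈ S) :
    #(F.filter fun e => IsStep i e.1.1 e.1.2) + #(S.image (· j)) ≤ #S := by
  set Fi := F.filter fun e => IsStep i e.1.1 e.1.2
  have htail_inj : Set.InjOn (fun e : OEdge q d => e.1.1) Fi := by
    intro e he e' he' (h : e.1.1 = e'.1.1)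
    have hstep := (mem_filter.mp he).2
    have hstep' := (mem_filter.mp he').2
    exact Subtype.ext (Prod.ext h (hstep.right_unique (h ▸ hstep')))
  rw [← card_image_of_injOn htail_inj]
  refine card_add_card_image_le_of_forall_exists_lt ?_ _ (· i) ?_
  · simp only [image_subset_iff]
    exact fun e he => (hF e (mem_filter.mp he).1).1
  · simp only [mem_image, forall_exists_index, and_imp]
    rintro _ e he rfl
    obtain ⟨heF, hstep⟩ := mem_filter.mp he
    exact ⟨e.1.2, (hF e heF).2, hstep.2 j hji, Fin.lt_def.mpr (by rw [hstep.1]; omega)⟩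

theorem card_add_card_image_add_card_image_le {q : ℕ} {S : Finset (Fin 2 → Fin q)}
    {F : Finset (OEdge q 2)} (hF : ∀ e ∈ F, e.1.1 ∈ S ∧ e.1.2 ∈ S) :
    #F + #(S.image (· 1)) + #(S.image (· 0)) ≤ 2 * #S := by
  have hsplit : #F ≤ #(F.filter fun e => IsStep 0 e.1.1 e.1.2) +
      #(F.filter fun e => IsStep 1 e.1.1 e.1.2) := by
    calc #F = #(F.filter fun e => IsStep 0 e.1.1 e.1.2 ∨ IsStep 1 e.1.1 e.1.2) := by
          rw [filter_true_of_mem fun e _ => e.isStep]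
      _ ≤ _ := by rw [filter_or]; exact card_union_le _ _
  have h0 := card_filter_isStep_add_card_image_le (i := 0) (j := 1) one_ne_zero hF
  have h1 := card_filter_isStep_add_card_image_le (i := 1) (j := 0) zero_ne_one hF
  omega

theorem card_add_sqrt_add_one_le {q : ℕ} {S : Finset (Fin 2 → Fin q)} (hS : S.Nonempty)
    {F : Finset (OEdge q 2)} (hF : ∀ e ∈ F, e.1.1 ∈ S ∧ e.1.2 ∈ S) :
    (#F : ℝ) + √(2 * #F + 1) + 1 ≤ 2 * #S := by
  have hrows : 1 ≤ #(S.image (· 1)) := (hS.image _).card_pos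
  have hprod : #S ≤ #(S.image (· 0)) * #(S.image (· 1)) := by
    simpa [Fin.prod_univ_two] using card_le_prod_card_image S
  have hcount := card_add_card_image_add_card_image_le hF
  refine add_sqrt_two_mul_add_one_add_one_le (r := #(S.image (· 1))) (r' := #(S.image (· 0)))
    ?_ ?_ ?_
  · exact_mod_cast (by omega : 1 ≤ #(S.image (· 1)) + #(S.image (· 0)))
  · rw [mul_comm]; exact_mod_cast hprod
  · exact_mod_cast hcount

theorem two_mul_card_add_card_add_sqrt_le {q : ℕ} {Z : Type*} [Fintype Z] [DecidableEq Z]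
    {φ : (Fin 2 → Fin q) → Z} (hφ : Function.Surjective φ) {Λ : Finset (OEdge q 2)}
    (hΛ : ∀ e ∈ Λ, φ e.1.1 = φ e.1.2) :
    2 * (Fintype.card Z : ℝ) + #Λ + √(2 * #Λ + 1) - 1 ≤ 2 * q ^ 2 := by
  set S : Z → Finset (Fin 2 → Fin q) := fun z => univ.filter (φ · = z)
  set F : Z → Finset (OEdge q 2) := fun z => Λ.filter (φ ·.1.1 = z)
  have hcomponent (z : Z) : (#(F z) : ℝ) + √(2 * #(F z) + 1) + 1 ≤ 2 * #(S z) := by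
    refine card_add_sqrt_add_one_le ?_ fun e he => ?_
    · obtain ⟨v, rfl⟩ := hφ z
      exact ⟨v, by simp [S]⟩
    · obtain ⟨heΛ, rfl⟩ := mem_filter.mp he
      simp [S, hΛ e heΛ]
  have hvertices : ∑ z, #(S z) = q ^ 2 := by
    rw [← card_eq_sum_card_fiberwise fun _ _ => mem_univ _]
    simp
  have hedges : ∑ z, #(F z) = #Λ :=
    (card_eq_sum_card_fiberwise fun _ _ => mem_univ _).symm
  have hsubadd : √(2 * #Λ + 1) - 1 ≤ ∑ z, (√(2 * #(F z) + 1) - 1) := by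
    rw [← hedges]
    refine le_sum_of_subadditive (fun k : ℕ => √(2 * k + 1) - 1) (by simp) (fun x y => ?_) _ _
    have := sqrt_two_mul_add_add_one_le (Nat.cast_nonneg' x) (Nat.cast_nonneg' (α := ℝ) y)
    push_cast
    linarith
  have hsum := sum_le_sum fun z (_ : z ∈ univ) => hcomponent z
  simp only [sum_add_distrib, sum_sub_distrib, sum_const, card_univ, ← mul_sum, ← Nat.cast_sum,
    hvertices, hedges, nsmul_eq_mul] at hsum hsubadd
  push_cast at hsum
  linarith

theorem mulVec_grad_apply {q d : ℕ} (x : (Fin d → Fin q) → ℝ) (e : OEdge q d) :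
    (grad q d).mulVec x e = x e.1.2 - x e.1.1 := by
  have hne : e.1.2 ≠ e.1.1 := fun h => (e.2.2.trans_eq (congrArg (enc q d) h)).false
  have hrow : grad q d e = Pi.single e.1.2 1 - Pi.single e.1.1 1 := by
    funext v
    by_cases h2 : v = e.1.2
    · subst h2; simp [grad, hne]
    · by_cases h1 : v = e.1.1
      · subst h1; simp [grad, hne.symm]
      · simp [grad, h1, h2]
  rw [Matrix.mulVec, hrow, sub_dotProduct, single_dotProduct, single_dotProduct, one_mul, one_mul]

theorem mem_Wgrad_iff {q d : ℕ} {Λ : Finset (OEdge q d)} {x : (Fin d → Fin q) → ℝ} :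
    x ∈ Wgrad q d Λ ↔ ∀ e ∈ Λ, x e.1.1 = x e.1.2 := by
  simp only [Wgrad, Submodule.mem_iInf, LinearMap.mem_ker, LinearMap.comp_apply,
    LinearMap.proj_apply, Matrix.mulVecLin_apply, mulVec_grad_apply, sub_eq_zero, eq_comm]

def EdgeRel {q d : ℕ} (Λ : Finset (OEdge q d)) (a b : Fin d → Fin q) : Prop :=
  ∃ e ∈ Λ, e.1 = (a, b)

theorem finrank_Wgrad_le_card_quot {q d : ℕ} (Λ : Finset (OEdge q d)) :
    Module.finrank ℝ (Wgrad q d Λ) ≤ Nat.card (Quot (EdgeRel Λ)) :=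
  finrank_le_card_quot _ _ fun _ hx _ _ ⟨e, he, hab⟩ => by
    obtain ⟨rfl, rfl⟩ := Prod.mk.inj hab
    exact mem_Wgrad_iff.mp hx e he

theorem two_mul_finrank_Wgrad_add_card_add_sqrt_le (q : ℕ) (Λ : Finset (OEdge q 2)) :
    2 * (Module.finrank ℝ (Wgrad q 2 Λ) : ℝ) + #Λ + √(2 * #Λ + 1) - 1 ≤ 2 * q ^ 2 := by
  classical
  have := Fintype.ofFinite (Quot (EdgeRel Λ))
  have hdim := finrank_Wgrad_le_card_quot Λ
  rw [Nat.card_eq_fintype_card] at hdim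
  have hcomponents := two_mul_card_add_card_add_sqrt_le Quot.mk_surjective
    fun e he => Quot.sound (r := EdgeRel Λ) ⟨e, he, rfl⟩
  have : (Module.finrank ℝ (Wgrad q 2 Λ) : ℝ) ≤ Fintype.card (Quot (EdgeRel Λ)) := by
    exact_mod_cast hdim
  linarith

theorem stmt_13_general (q : ℕ) (ℓ : ℕ) (m : ℕ)
    (hm : (m : ℝ) ≥ 2 * (q : ℝ) ^ 2 - ((ℓ : ℝ) + Real.sqrt (2 * (ℓ : ℝ) + 1) - 1)) :
    (kappaGrad q 2 ℓ : ℝ) ≤ (m : ℝ) / 2 := by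
  have hbound : ∀ Λ ∈ univ.filter (fun Λ : Finset (OEdge q 2) => ℓ ≤ #Λ),
      Module.finrank ℝ (Wgrad q 2 Λ) ≤ m / 2 := by
    intro Λ hΛ
    have hℓ : (ℓ : ℝ) ≤ #Λ := by exact_mod_cast (mem_filter.mp hΛ).2
    have hsqrt : √(2 * ℓ + 1) ≤ √(2 * #Λ + 1) := Real.sqrt_le_sqrt (by linarith)
    have := two_mul_finrank_Wgrad_add_card_add_sqrt_le q Λ
    rw [Nat.le_div_iff_mul_le two_pos]
    exact_mod_cast (by linarith : (Module.finrank ℝ (Wgrad q 2 Λ) : ℝ) * 2 ≤ m)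
  calc (kappaGrad q 2 ℓ : ℝ) ≤ ((m / 2 : ℕ) : ℝ) := by exact_mod_cast Finset.sup_le hbound
    _ ≤ m / 2 := Nat.cast_div_le

/-- 2D, unknown cosupport: if `m ≥ 2n − (ℓ + √(2ℓ + 1) − 1)` with `n = q²`, then
`κ_∇(ℓ) ≤ m/2`, i.e. `m` measurements meet the sufficient condition of the
unknown-cosupport uniqueness criterion. -/
theorem stmt_13 (q : ℕ) (hq : 3 ≤ q) (ℓ : ℕ) (hl : 4 < ℓ) (hlp : ℓ ≤ 2 * q * (q - 1))
    (m : ℕ)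
    (hm : (m : ℝ) ≥ 2 * (q : ℝ) ^ 2 - ((ℓ : ℝ) + Real.sqrt (2 * (ℓ : ℝ) + 1) - 1)) :
    (kappaGrad q 2 ℓ : ℝ) ≤ (m : ℝ) / 2 :=
  stmt_13_general q ℓ m hm
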